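/- Let K be a number field with unit rank r ≥ 1 that is totally real or a CM field. Then ρ_∞(K) ≥ (1/2)·log((1+√5)/2). -/

import Mathlib

open NumberField

/-- The logarithmic embedding of a unit: the coordinate at an infinite place `w`
is `mult w * log (w x)`. -/
noncomputable def logEmb (K : Type) [Field K] [NumberField K] (u : (𝓞 K)ˣ) :
    NumberField.InfinitePlace K → ℝ :=
  fun w => (w.mult : ℝ) * Real.log (w ((u : 𝓞 K) : K))

/-- The covering radius `ρ_∞(K)` of the lattice of units with respect to the sup norm. -/
noncomputable def rhoInf (K : Type) [Field K] [NumberField K] : ℝ :=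
  ⨆ v : {v : NumberField.InfinitePlace K → ℝ // ∑ w, v w = 0},
    ⨅ u : (𝓞 K)ˣ, ‖(v : NumberField.InfinitePlace K → ℝ) - logEmb K u‖

/-- A number field is totally real if all its infinite places are real. -/
def IsTotallyRealField (K : Type) [Field K] : Prop :=
  ∀ v : NumberField.InfinitePlace K, v.IsReal

/-- A CM field: a totally imaginary number field which is a quadratic extension of a
totally real subfield. -/
def IsCMField (K : Type) [Field K] : Prop :=
  (∀ v : NumberField.InfinitePlace K, v.IsComplex) ∧
  ∃ F : Subfield K, IsTotallyRealField F ∧ Module.finrank F K = 2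

/-!
Put `c = ½ log φ` with `φ` the golden ratio, and `v = c • (e_{w₁} - e_{w₂})`, a trace-zero vector
with `‖v‖ = c`. If a unit `u` had `‖v - ℓ(u)‖ < c`, then `‖ℓ(u)‖ < log φ`. Replacing `u` by `u ū`
in the CM case gives a unit `t` whose conjugates are all real with `φ⁻¹ < |σ t| < φ`. As
`φ - φ⁻¹ = 1` and `x ↦ x - x⁻¹` is increasing on `(0, ∞)`, every conjugate of the algebraic
integer `t - t⁻¹` lies in the open unit disc, so `t - t⁻¹ = 0`. Then `ℓ(u) = 0` and
`‖v‖ < c`, which is absurd. The supremum defining `ρ_∞` is finite because the unit lattice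
is cocompact in the trace-zero hyperplane.
-/

open Real in
theorem abs_sub_inv_lt_one_of_abs_log_lt {a : ℝ} (ha : |log a| < log goldenRatio) :
    |a - a⁻¹| < 1 := by
  wlog hpos : 0 < a generalizing a
  · rcases (not_lt.mp hpos).eq_or_lt with rfl | hneg
    · simp
    · have := this (a := -a) (by rwa [log_neg_eq_log]) (neg_pos.mpr hneg)
      rwa [inv_neg, sub_neg_eq_add, neg_add_eq_sub, abs_sub_comm] at this
  obtain ⟨hlo, hhi⟩ := abs_lt.mp ha
  have hlt : a < goldenRatio := (log_lt_log_iff hpos goldenRatio_pos).mp hhi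
  have hgt : goldenRatio⁻¹ < a := by
    rw [← log_lt_log_iff (inv_pos.mpr goldenRatio_pos) hpos, log_inv]; linarith
  have hinv_lt : a⁻¹ < goldenRatio := by rwa [inv_lt_comm₀ hpos goldenRatio_pos]
  have hinv_gt : goldenRatio⁻¹ < a⁻¹ := inv_strictAnti₀ hpos hlt
  have hgold : goldenRatio - goldenRatio⁻¹ = 1 := by
    rw [inv_goldenRatio, sub_neg_eq_add, goldenRatio_add_goldenConj]
  rw [abs_lt]
  constructor <;> linarith

theorem ZLattice.exists_forall_exists_mem_norm_sub_le {E : Type*} [NormedAddCommGroup E]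
    [NormedSpace ℝ E] [FiniteDimensional ℝ E] (L : Submodule ℤ E) [DiscreteTopology L]
    [IsZLattice ℝ L] : ∃ C : ℝ, ∀ x : E, ∃ y ∈ L, ‖x - y‖ ≤ C := by
  have := ZLattice.module_free ℝ L
  let b := (Module.Free.chooseBasis ℤ L).ofZLatticeBasis ℝ L
  refine ⟨∑ i, ‖b i‖, fun x => ⟨ZSpan.floor b x, ?_, ZSpan.norm_fract_le b x⟩⟩
  have hspan : Submodule.span ℤ (Set.range b) ≤ L := Submodule.span_le.mpr <| by
    rintro _ ⟨i, rfl⟩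
    simp [b]
  exact hspan (ZSpan.floor b x).2

theorem norm_le_card_mul_norm_restrict_of_sum_eq_zero {ι : Type*} [Fintype ι] [DecidableEq ι]
    {g : ι → ℝ} (hg : ∑ i, g i = 0) (i₀ : ι) :
    ‖g‖ ≤ Fintype.card ι * ‖fun i : {i // i ≠ i₀} => g i‖ := by
  set M := ‖fun i : {i // i ≠ i₀} => g i‖
  have hM : ∀ i : {i // i ≠ i₀}, ‖g i‖ ≤ M := norm_le_pi_norm (fun i : {i // i ≠ i₀} => g i)
  have hcard : Fintype.card {i // i ≠ i₀} ≤ Fintype.card ι := Fintype.card_subtype_le _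
  refine (pi_norm_le_iff_of_nonneg (by positivity)).mpr fun i => ?_
  by_cases hi : i = i₀
  · subst hi
    rw [Fintype.sum_eq_add_sum_subtype_ne _ i, add_eq_zero_iff_eq_neg] at hg
    calc ‖g i‖ = ‖∑ j : {j // j ≠ i}, g j‖ := by rw [hg, norm_neg]
      _ ≤ ∑ j : {j // j ≠ i}, ‖g j‖ := norm_sum_le _ _
      _ ≤ Fintype.card {j // j ≠ i} * M := by
        have := Finset.sum_le_card_nsmul Finset.univ _ M fun j _ => hM j
        rwa [Finset.card_univ, nsmul_eq_mul] at this
      _ ≤ Fintype.card ι * M := by gcongr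
  · calc ‖g i‖ ≤ M := hM ⟨i, hi⟩
      _ ≤ Fintype.card ι * M := le_mul_of_one_le_left (norm_nonneg _) (by
          exact_mod_cast Fintype.card_pos_iff.mpr ⟨i⟩)

theorem norm_single_sub_single {ι : Type*} [Fintype ι] [DecidableEq ι] {i j : ι} (hij : i ≠ j)
    {c : ℝ} (hc : 0 ≤ c) : ‖(Pi.single i c - Pi.single j c : ι → ℝ)‖ = c := by
  refine le_antisymm ((pi_norm_le_iff_of_nonneg hc).mpr fun k => ?_) ?_
  · by_cases hki : k = i <;> by_cases hkj : k = j <;> simp_all [abs_of_nonneg hc]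
  · have := norm_le_pi_norm (Pi.single i c - Pi.single j c : ι → ℝ) i
    rwa [Pi.sub_apply, Pi.single_eq_same, Pi.single_eq_of_ne hij, sub_zero, Real.norm_eq_abs,
      abs_of_nonneg hc] at this

open NumberField.InfinitePlace

section NumberField

variable {K : Type*} [Field K] [NumberField K]

theorem NumberField.RingOfIntegers.eq_zero_of_forall_infinitePlace_lt_one {a : 𝓞 K}
    (h : ∀ w : InfinitePlace K, w a < 1) : a = 0 := by
  by_contra ha
  obtain ⟨w⟩ := (inferInstance : Nonempty (InfinitePlace K))
  exact (h w).not_ge (one_le_of_lt_one ha fun z _ => h z)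

theorem NumberField.Units.infinitePlace_eq_one_of_abs_log_lt (x : (𝓞 K)ˣ)
    (hreal : ∀ w : InfinitePlace K, ∃ r : ℝ, embedding w x = r)
    (hlog : ∀ w : InfinitePlace K, |Real.log (w x)| < Real.log Real.goldenRatio)
    (w : InfinitePlace K) : w x = 1 := by
  have hsmall : ∀ w : InfinitePlace K, w ((x - x⁻¹ : 𝓞 K) : K) < 1 := by
    intro w
    obtain ⟨r, hr⟩ := hreal w
    have hwx : w x = |r| := by rw [← norm_embedding_eq, hr, Complex.norm_real, Real.norm_eq_abs]
    have hcoe : ((x - x⁻¹ : 𝓞 K) : K) = (x : K) - (x : K)⁻¹ := by simp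
    rw [← norm_embedding_eq, hcoe, map_sub, map_inv₀, hr, ← Complex.ofReal_inv,
      ← Complex.ofReal_sub, Complex.norm_real, Real.norm_eq_abs]
    exact abs_sub_inv_lt_one_of_abs_log_lt (by rw [← Real.log_abs, ← hwx]; exact hlog w)
  have hinv : x = x⁻¹ := Units.ext (sub_eq_zero.mp
    (RingOfIntegers.eq_zero_of_forall_infinitePlace_lt_one hsmall))
  have hsq : w x * w x = 1 := by
    conv_lhs => arg 2; rw [hinv]
    simp [map_units_inv, (Units.pos_at_place x w).ne']
  nlinarith [(Units.pos_at_place x w).le]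

end NumberField

theorem IsCMField.numberField_isCMField {K : Type} [Field K] [NumberField K]
    (h : _root_.IsCMField K) : NumberField.IsCMField K := by
  obtain ⟨hcomplex, F, hF, hrank⟩ := h
  have : IsTotallyReal F := ⟨hF⟩
  have : IsTotallyComplex K := ⟨hcomplex⟩
  have : Algebra.IsQuadraticExtension F K := ⟨hrank⟩
  exact NumberField.IsCMField.ofCMExtension F K

section logEmb

variable {K : Type} [Field K] [NumberField K]

theorem exists_unit_forall_embedding_real_and_logEmb_eq
    (hK : IsTotallyRealField K ∨ _root_.IsCMField K) (u : (𝓞 K)ˣ) :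
    ∃ t : (𝓞 K)ˣ, (∀ w : InfinitePlace K, ∃ r : ℝ, embedding w t = r) ∧
      ∀ w : InfinitePlace K, logEmb K u w = Real.log (w t) := by
  rcases hK with hreal | hCM
  · refine ⟨u, fun w => ⟨_, (embedding_of_isReal_apply (hreal w) _).symm⟩, fun w => ?_⟩
    simp [logEmb, mult, hreal w]
  · have := hCM.numberField_isCMField
    refine ⟨u * NumberField.IsCMField.unitsComplexConj K u,
      fun w => ⟨Complex.normSq (embedding w u), ?_⟩, fun w => ?_⟩
    · simp [Complex.mul_conj]
    · simp [logEmb, Real.log_mul, (Units.pos_at_place u w).ne', two_mul]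

theorem logEmb_eq_zero_of_norm_lt (hK : IsTotallyRealField K ∨ _root_.IsCMField K)
    {u : (𝓞 K)ˣ} (hu : ‖logEmb K u‖ < Real.log Real.goldenRatio) : logEmb K u = 0 := by
  obtain ⟨t, ht_real, ht_log⟩ := exists_unit_forall_embedding_real_and_logEmb_eq hK u
  have ht_small : ∀ w : InfinitePlace K, |Real.log (w t)| < Real.log Real.goldenRatio := fun w =>
    ht_log w ▸ (norm_le_pi_norm (logEmb K u) w).trans_lt hu
  funext w
  rw [Pi.zero_apply, ht_log, Units.infinitePlace_eq_one_of_abs_log_lt t ht_real ht_small,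
    Real.log_one]

theorem norm_le_norm_sub_logEmb (hK : IsTotallyRealField K ∨ _root_.IsCMField K)
    {v : InfinitePlace K → ℝ} (hv : 2 * ‖v‖ ≤ Real.log Real.goldenRatio) (u : (𝓞 K)ˣ) :
    ‖v‖ ≤ ‖v - logEmb K u‖ := by
  by_contra! hlt
  have hsmall : ‖logEmb K u‖ < Real.log Real.goldenRatio :=
    calc ‖logEmb K u‖ ≤ ‖v‖ + ‖v - logEmb K u‖ := norm_le_insert _ _
      _ < 2 * ‖v‖ := by linarith
      _ ≤ _ := hv
  rw [logEmb_eq_zero_of_norm_lt hK hsmall, sub_zero] at hlt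
  exact hlt.false

theorem sum_logEmb (u : (𝓞 K)ˣ) : ∑ w, logEmb K u w = 0 :=
  NumberField.Units.sum_mult_mul_log u

open NumberField.Units dirichletUnitTheorem in
theorem exists_forall_exists_norm_sub_logEmb_le :
    ∃ C : ℝ, ∀ v : InfinitePlace K → ℝ, ∑ w, v w = 0 → ∃ u : (𝓞 K)ˣ, ‖v - logEmb K u‖ ≤ C := by
  classical
  obtain ⟨C, hC⟩ := ZLattice.exists_forall_exists_mem_norm_sub_le (unitLattice K)
  refine ⟨Fintype.card (InfinitePlace K) * C, fun v hv => ?_⟩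
  obtain ⟨_, hy, hvy⟩ := hC fun w => v w.1
  obtain ⟨u, -, rfl⟩ := Submodule.mem_map.mp hy
  refine ⟨u.toMul, ?_⟩
  have hsum : ∑ w, (v - logEmb K u.toMul) w = 0 := by
    simp only [Pi.sub_apply, Finset.sum_sub_distrib, hv, sum_logEmb, sub_zero]
  calc ‖v - logEmb K u.toMul‖
      ≤ Fintype.card (InfinitePlace K) * ‖fun w : {w // w ≠ w₀} => (v - logEmb K u.toMul) w.1‖ :=
        norm_le_card_mul_norm_restrict_of_sum_eq_zero hsum w₀
    _ = Fintype.card (InfinitePlace K) * ‖(fun w => v w.1) - logEmbedding K u‖ := rfl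
    _ ≤ Fintype.card (InfinitePlace K) * C := by gcongr; exact hvy

theorem le_rhoInf {v : InfinitePlace K → ℝ} (hv : ∑ w, v w = 0) {c : ℝ}
    (hc : ∀ u : (𝓞 K)ˣ, c ≤ ‖v - logEmb K u‖) : c ≤ rhoInf K := by
  obtain ⟨C, hC⟩ := exists_forall_exists_norm_sub_logEmb_le (K := K)
  have hbdd : BddAbove (Set.range fun v : {v : InfinitePlace K → ℝ // ∑ w, v w = 0} =>
      ⨅ u : (𝓞 K)ˣ, ‖(v : InfinitePlace K → ℝ) - logEmb K u‖) := by
    refine ⟨C, ?_⟩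
    rintro _ ⟨v, rfl⟩
    obtain ⟨u, hu⟩ := hC v.1 v.2
    exact ciInf_le_of_le ⟨0, by rintro _ ⟨u, rfl⟩; positivity⟩ u hu
  exact (le_ciInf hc).trans (le_ciSup hbdd ⟨v, hv⟩)

end logEmb

/-- If `K` is a totally real or CM number field of unit rank `r ≥ 1`, then
`ρ_∞(K) ≥ (1/2)·log((1+√5)/2)`. -/
theorem rhoInf_ge_golden_ratio_bound (K : Type) [Field K] [NumberField K]
    (hr : 1 ≤ NumberField.Units.rank K)
    (hK : IsTotallyRealField K ∨ _root_.IsCMField K) :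
    (1 / 2 : ℝ) * Real.log ((1 + Real.sqrt 5) / 2) ≤ rhoInf K := by
  classical
  obtain ⟨w₁, w₂, hne⟩ := Fintype.exists_pair_of_one_lt_card (α := InfinitePlace K)
    (by rw [NumberField.Units.rank] at hr; omega)
  set c := (1 / 2 : ℝ) * Real.log Real.goldenRatio with hc_def
  have hc : 0 ≤ c := by have := Real.log_pos Real.one_lt_goldenRatio; positivity
  set v : InfinitePlace K → ℝ := Pi.single w₁ c - Pi.single w₂ c
  have hv : ‖v‖ = c := norm_single_sub_single hne hc
  refine hv ▸ le_rhoInf (v := v) (by simp [v, Finset.sum_sub_distrib])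
    fun u => norm_le_norm_sub_logEmb hK (by rw [hv, hc_def]; linarith) u
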